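/- arXiv:math/0207272 — 3 statements merged into one kernel-verified Lean document; each statement's English description precedes it below -/
import Mathlib

section
/- Let $I$ be a set and $m : I \times I \to \mathbb{N}$ a function such that $m(\lambda,\mu) = m(\mu,\lambda)$ for all $\lambda, \mu$, for each $\lambda$ the set $\{\nu : m(\lambda,\nu) \neq 0\}$ is finite, and $m(\lambda,\mu) = \sum_{\nu \in I} m(\lambda,\nu)\, m(\nu,\mu)$ for all $\lambda,\mu$. Then for every $\lambda$ one has $m(\lambda,\lambda) \le 1$, and $m(\lambda,\nu) = 0$ whenever $\nu \neq \lambda$. -/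
/-- If `m : I → I → ℕ` is symmetric, has finite support in each variable, and satisfies
`m λ μ = ∑ ν, m λ ν * m ν μ`, then `m λ λ ≤ 1` and `m λ ν = 0` for `ν ≠ λ`. -/
theorem stmt2 {I : Type*} (m : I → I → ℕ)
    (hsym : ∀ a b, m a b = m b a)
    (hfin : ∀ a, {b | m a b ≠ 0}.Finite)
    (hq : ∀ a b, m a b = ∑ᶠ c, m a c * m c b) :
    ∀ a : I, m a a ≤ 1 ∧ ∀ b : I, b ≠ a → m a b = 0 := by
  intro a
  classical
  set T := (hfin a).toFinset with hT
  have key : m a a = ∑ c ∈ T, m a c * m a c := by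
    rw [hq a a]
    have : ∀ c ∈ T, m a c * m c a = m a c * m a c := by
      intro c _; rw [hsym c a]
    rw [Finset.sum_congr rfl this |>.symm]
    apply finsum_eq_finset_sum_of_support_subset
    intro c hc
    simp only [Function.mem_support] at hc
    simp only [hT, Finset.coe_sort_coe, Set.Finite.coe_toFinset, Set.mem_setOf_eq]
    intro h; rw [h] at hc; simp at hc
  have hsum : ∑ c ∈ T, m a c * m a c = ∑ c ∈ insert a T, m a c * m a c := by
    by_cases ha : a ∈ T
    · rw [Finset.insert_eq_self.2 ha]
    · rw [Finset.sum_insert ha]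
      have : m a a = 0 := by
        by_contra h
        exact ha (by simpa [hT, Set.Finite.mem_toFinset] using h)
      simp [this]
  have key2 : m a a = m a a * m a a + ∑ c ∈ (insert a T).erase a, m a c * m a c :=
    (key.trans hsum).trans
      (Finset.add_sum_erase _ _ (Finset.mem_insert_self a T)).symm
  have h1 : m a a ≤ 1 := by nlinarith [Nat.le.intro key2.symm]
  refine ⟨h1, fun b hb => ?_⟩
  have hsq : m a a * m a a = m a a := by interval_cases h : m a a <;> simp
  have hR : ∑ c ∈ (insert a T).erase a, m a c * m a c = 0 := by omega
  by_contra h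
  have hbT : b ∈ (insert a T).erase a := by
    simp [hT, Finset.mem_erase, Set.Finite.mem_toFinset, hb, h]
  have := Finset.sum_eq_zero_iff.1 hR b hbT
  exact h (by nlinarith)
end

section
/- Let $k$ be a field and $R$ a nonzero finitely generated commutative $k$-algebra. If there exists an injective $k$-algebra homomorphism $R \otimes_k R \to R$, then the structure map $k \to R$ is an isomorphism, i.e. $R = k$. -/
/-!
Algebraically independent families in `A` and in `B` remain jointly algebraically independent
in `A ⊗[R] B`, so `trdeg (R ⊗ R) ≥ 2 trdeg R`. An injection `R ⊗ R → R` therefore forces the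
(finite) transcendence degree of `R` to vanish: `R` is algebraic, hence finite-dimensional,
and then `(dim R)² ≤ dim R` gives `dim R = 1`.
-/

open TensorProduct Cardinal MvPolynomial Algebra

universe u

namespace AlgebraicIndependent

variable {R A B ι κ : Type*} [CommRing R] [CommRing A] [CommRing B] [Algebra R A] [Algebra R B]
  [Module.Flat R B] {x : ι → A} {y : κ → B}

theorem tensorProduct (hx : AlgebraicIndependent R x) (hy : AlgebraicIndependent R y) :
    AlgebraicIndependent R (Sum.elim (fun i ↦ x i ⊗ₜ[R] (1 : B)) (fun j ↦ (1 : A) ⊗ₜ[R] y j)) := by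
  let e := tensorEquivSum R ι κ R
  have aeval_eq : aeval (Sum.elim (fun i ↦ x i ⊗ₜ[R] (1 : B)) (fun j ↦ (1 : A) ⊗ₜ[R] y j)) =
      (Algebra.TensorProduct.map (aeval x) (aeval y)).comp e.symm.toAlgHom := by
    refine algHom_ext fun i ↦ ?_
    rcases i with i | j
    · have : e.symm (X (.inl i)) = X i ⊗ₜ 1 := e.symm_apply_eq.mpr (by simp [e])
      simp [this]
    · have : e.symm (X (.inr j)) = 1 ⊗ₜ X j := e.symm_apply_eq.mpr (by simp [e])
      simp [this]
  rw [algebraicIndependent_iff_injective_aeval, aeval_eq]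
  exact (map_injective_of_flat_flat' (aeval x).toLinearMap (aeval y).toLinearMap hx hy).comp
    e.symm.injective

end AlgebraicIndependent

theorem trdeg_add_trdeg_le_trdeg_tensorProduct {R : Type*} {A B : Type u} [CommRing R]
    [Nontrivial R] [CommRing A] [CommRing B] [Algebra R A] [Algebra R B] [FaithfulSMul R A]
    [FaithfulSMul R B] [Module.Flat R B] : trdeg R A + trdeg R B ≤ trdeg R (A ⊗[R] B) := by
  have : Nonempty {s : Set A // AlgebraicIndepOn R id s} :=
    ⟨⟨∅, (algebraicIndependent_empty_iff R A).mpr (FaithfulSMul.algebraMap_injective R A)⟩⟩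
  have : Nonempty {t : Set B // AlgebraicIndepOn R id t} :=
    ⟨⟨∅, (algebraicIndependent_empty_iff R B).mpr (FaithfulSMul.algebraMap_injective R B)⟩⟩
  rw [trdeg, trdeg, Cardinal.ciSup_add_ciSup _ bddAbove_of_small _ bddAbove_of_small]
  refine ciSup_le' fun s ↦ ciSup_le' fun t ↦ ?_
  simpa using (s.2.tensorProduct t.2).cardinalMk_le_trdeg

theorem trdeg_eq_zero_of_injective_tensorProduct_self {k A : Type*} [Field k] [CommRing A]
    [Nontrivial A] [Algebra k A] [Algebra.FiniteType k A]
    (f : A ⊗[k] A →ₐ[k] A) (hf : Function.Injective f) : trdeg k A = 0 := by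
  have hle := trdeg_add_trdeg_le_trdeg_tensorProduct.trans (trdeg_le_of_injective f hf)
  obtain ⟨n, hn⟩ := Cardinal.lt_aleph0.mp (trdeg_lt_aleph0_of_finiteType (R := k) (S := A))
  rw [hn] at hle ⊢
  norm_cast at hle ⊢
  omega

theorem Module.finrank_eq_one_of_injective_tensorProduct_self {k V : Type*} [Field k]
    [AddCommGroup V] [Module k V] [FiniteDimensional k V] [Nontrivial V]
    (f : V ⊗[k] V →ₗ[k] V) (hf : Function.Injective f) : Module.finrank k V = 1 := by
  have hle := LinearMap.finrank_le_finrank_of_injective hf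
  rw [Module.finrank_tensorProduct] at hle
  have hpos := Module.finrank_pos (R := k) (M := V)
  nlinarith

open TensorProduct in
/-- If a nonzero finitely generated commutative `k`-algebra `R` admits an injective
`k`-algebra homomorphism `R ⊗_k R → R`, then `R = k`. -/
theorem stmt3 {k R : Type*} [Field k] [CommRing R] [Nontrivial R] [Algebra k R]
    [Algebra.FiniteType k R]
    (f : (R ⊗[k] R) →ₐ[k] R) (hf : Function.Injective f) :
    Function.Bijective (algebraMap k R) := by
  have : Algebra.IsAlgebraic k R :=
    trdeg_eq_zero_iff.mp (trdeg_eq_zero_of_injective_tensorProduct_self f hf)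
  have : Module.Finite k R := Algebra.IsIntegral.finite
  exact Algebra.finrank_eq_one_iff_bijective_algebraMap.mp
    (Module.finrank_eq_one_of_injective_tensorProduct_self f.toLinearMap hf)
end

section
/- Let $R$ be a commutative ring with an ascending filtration $R_{\le 0} \subseteq R_{\le 1} \subseteq \cdots$ by subgroups with $1 \in R_{\le 0}$, $R_{\le m} \cdot R_{\le n} \subseteq R_{\le m+n}$, and $R = \bigcup_n R_{\le n}$. Let $\mathcal{R} = \bigoplus_{n \ge 0} R_{\le n} z^n \subseteq R[z]$ be the associated Rees algebra. Then the assignment sending an ideal $I \subseteq R$ to $\mathcal{I} = \bigoplus_{n \ge 0} (I \cap R_{\le n}) z^n$ is a bijection from ideals of $R$ to those graded ideals $\mathcal{I}$ of $\mathcal{R}$ such that $z$ is a non-zero-divisor in $\mathcal{R}/\mathcal{I}$. Moreover, $I$ is a prime ideal if and only if $\mathcal{I}$ is prime, and $I$ is a radical ideal if and only if $\mathcal{I}$ is radical. -/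
/-!
Writing `ℐ(I) = ℛ ∩ I[z]`, the ideal, primality and radicality properties of `ℐ(I)` are inherited
from those of `I[z] ⊆ R[z]`, and conversely they are detected on the homogeneous elements `r zⁿ`,
which lie in `ℐ(I)` exactly when `r ∈ I`. For surjectivity, the inverse of `I ↦ ℐ(I)` sends `J` to
`{r | r zⁿ ∈ J for some n}`: multiplying by powers of `z` moves `r zⁿ` up in degree, and regularity
of `z` moves it down as far as the filtration allows, so whether `r zⁿ ∈ J` does not depend on `n`.
A graded `J` is then the sum of its homogeneous components.
-/

open Polynomial

section IdealsInSubring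

variable {A : Type*} [Ring A]

/-- `J` is an ideal of the subring `S`, viewed as a subset of the ambient ring. -/
structure IsIdealIn (S : Subring A) (J : Set A) : Prop where
  subset : J ⊆ S
  zero_mem : (0 : A) ∈ J
  add_mem : ∀ p ∈ J, ∀ q ∈ J, p + q ∈ J
  mul_mem : ∀ p ∈ S, ∀ q ∈ J, p * q ∈ J

def IsPrimeIn (S : Subring A) (J : Set A) : Prop :=
  J ≠ S ∧ ∀ p ∈ S, ∀ q ∈ S, p * q ∈ J → p ∈ J ∨ q ∈ J

def IsRadicalIn (S : Subring A) (J : Set A) : Prop :=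
  ∀ p ∈ S, ∀ n : ℕ, 0 < n → p ^ n ∈ J → p ∈ J

theorem isIdealIn_iff {S : Subring A} {J : Set A} :
    IsIdealIn S J ↔ J ⊆ S ∧ (0 : A) ∈ J ∧ (∀ p ∈ J, ∀ q ∈ J, p + q ∈ J) ∧
      ∀ p ∈ S, ∀ q ∈ J, p * q ∈ J :=
  ⟨fun h => ⟨h.subset, h.zero_mem, h.add_mem, h.mul_mem⟩, fun ⟨h₁, h₂, h₃, h₄⟩ => ⟨h₁, h₂, h₃, h₄⟩⟩

theorem IsIdealIn.sum_mem {S : Subring A} {J : Set A} (hJ : IsIdealIn S J) {ι : Type*}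
    {s : Finset ι} {f : ι → A} (h : ∀ i ∈ s, f i ∈ J) : ∑ i ∈ s, f i ∈ J :=
  Finset.sum_induction f (· ∈ J) (fun a b ha hb => hJ.add_mem a ha b hb) hJ.zero_mem h

end IdealsInSubring

section GradedSets

variable {R : Type*} [CommRing R]

def IsGraded (J : Set R[X]) : Prop :=
  ∀ p ∈ J, ∀ n : ℕ, C (p.coeff n) * X ^ n ∈ J

/-- `X` is a non-zero-divisor on `S / J`. -/
def IsXRegular (S : Subring R[X]) (J : Set R[X]) : Prop :=
  ∀ p ∈ S, X * p ∈ J → p ∈ J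

theorem IsXRegular.mem_of_X_pow_mul_mem {S : Subring R[X]} {J : Set R[X]} (hJ : IsXRegular S J)
    (hX : X ∈ S) {p : R[X]} (hp : p ∈ S) (k : ℕ) (h : X ^ k * p ∈ J) : p ∈ J := by
  induction k with
  | zero => simpa using h
  | succ k ih =>
    refine ih (hJ _ (mul_mem (pow_mem hX k) hp) ?_)
    rwa [← mul_assoc, ← pow_succ']

end GradedSets

instance Polynomial.instIsReduced {R : Type*} [CommRing R] [IsReduced R] : IsReduced R[X] :=
  (isReduced_iff _).2 fun _ hp => ext fun n => (Polynomial.isNilpotent_iff.1 hp n).eq_zero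

theorem Ideal.IsRadical.map_C {R : Type*} [CommRing R] {I : Ideal R} (hI : I.IsRadical) :
    (I.map (C : R →+* R[X])).IsRadical := by
  have := (Ideal.isRadical_iff_quotient_reduced I).1 hI
  rw [← Ideal.mk_ker (I := I), ← ker_mapRingHom]
  exact (RingHom.ker_isRadical_iff_reduced_of_surjective
    (map_surjective _ Ideal.Quotient.mk_surjective)).2 inferInstance

section ReesAlgebra

variable {R : Type*} [CommRing R] (F : ℕ → AddSubgroup R) [SetLike.GradedMonoid F]

/-- The Rees algebra `⊕ₙ F n zⁿ` of the filtration `F`, as a subring of `R[z]`. -/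
def reesSubring : Subring R[X] where
  carrier := {p | ∀ n, p.coeff n ∈ F n}
  zero_mem' n := by simp
  one_mem' n := by
    rw [coeff_one]
    split_ifs with h
    · exact h ▸ SetLike.one_mem_graded F
    · exact zero_mem _
  add_mem' hp hq n := by simpa using add_mem (hp n) (hq n)
  neg_mem' hp n := by simpa using neg_mem (hp n)
  mul_mem' hp hq n := by
    rw [coeff_mul]
    exact sum_mem fun c hc =>
      Finset.HasAntidiagonal.mem_antidiagonal.1 hc ▸ SetLike.GradedMul.mul_mem (hp c.1) (hq c.2)

/-- The ideal `⊕ₙ (I ∩ F n) • zⁿ` of the Rees algebra. -/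
def reesIdeal (I : Ideal R) : Set R[X] :=
  (reesSubring F : Set R[X]) ∩ (I.map C : Ideal R[X])

variable {F}

theorem mem_reesSubring {p : R[X]} : p ∈ reesSubring F ↔ ∀ n, p.coeff n ∈ F n :=
  Iff.rfl

theorem C_mul_X_pow_mem_reesSubring {r : R} {n : ℕ} (hr : r ∈ F n) :
    C r * X ^ n ∈ reesSubring F := fun k => by
  rw [coeff_C_mul_X_pow]
  split_ifs with h
  · exact h ▸ hr
  · exact zero_mem _

theorem mem_of_C_mul_X_pow_mem_reesSubring {r : R} {n : ℕ} (h : C r * X ^ n ∈ reesSubring F) :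
    r ∈ F n := by
  simpa using mem_reesSubring.1 h n

theorem X_mem_reesSubring (hmono : Monotone F) : X ∈ reesSubring F := by
  simpa using C_mul_X_pow_mem_reesSubring (hmono zero_le_one (SetLike.one_mem_graded F))

theorem mem_reesIdeal {I : Ideal R} {p : R[X]} :
    p ∈ reesIdeal F I ↔ p ∈ reesSubring F ∧ ∀ n, p.coeff n ∈ I :=
  and_congr_right' Ideal.mem_map_C_iff

theorem C_mul_X_pow_mem_reesIdeal_iff {I : Ideal R} {r : R} {n : ℕ} (hr : r ∈ F n) :
    C r * X ^ n ∈ reesIdeal F I ↔ r ∈ I :=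
  ⟨fun h => by simpa using (mem_reesIdeal.1 h).2 n, fun hrI =>
    ⟨C_mul_X_pow_mem_reesSubring hr, Ideal.mul_mem_right _ _ (Ideal.mem_map_of_mem _ hrI)⟩⟩

theorem isIdealIn_reesIdeal (I : Ideal R) : IsIdealIn (reesSubring F) (reesIdeal F I) where
  subset := Set.inter_subset_left
  zero_mem := ⟨zero_mem _, zero_mem _⟩
  add_mem _ hp _ hq := ⟨add_mem hp.1 hq.1, add_mem hp.2 hq.2⟩
  mul_mem _ hp _ hq := ⟨mul_mem hp hq.1, Ideal.mul_mem_left _ _ hq.2⟩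

theorem isGraded_reesIdeal (I : Ideal R) : IsGraded (reesIdeal F I) := fun _ hp n =>
  (C_mul_X_pow_mem_reesIdeal_iff (mem_reesSubring.1 hp.1 n)).2 ((mem_reesIdeal.1 hp).2 n)

theorem isXRegular_reesIdeal (I : Ideal R) : IsXRegular (reesSubring F) (reesIdeal F I) :=
  fun p hp hXp => mem_reesIdeal.2 ⟨hp, fun n => by
    simpa only [coeff_X_mul] using (mem_reesIdeal.1 hXp).2 (n + 1)⟩

theorem reesIdeal_injective (hunion : ∀ r : R, ∃ n, r ∈ F n) :
    Function.Injective (reesIdeal F) := fun I J h => Ideal.ext fun r => by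
  obtain ⟨n, hn⟩ := hunion r
  rw [← C_mul_X_pow_mem_reesIdeal_iff hn, ← C_mul_X_pow_mem_reesIdeal_iff hn, h]

section Surjectivity

variable {J : Set R[X]} (hmono : Monotone F) (hJ : IsIdealIn (reesSubring F) J)
  (hreg : IsXRegular (reesSubring F) J)
include hmono hJ hreg

theorem C_mul_X_pow_mem_of_C_mul_X_pow_mem {r : R} {m n : ℕ} (hr : r ∈ F m)
    (h : C r * X ^ n ∈ J) : C r * X ^ m ∈ J := by
  have hXpow (k : ℕ) : X ^ k ∈ reesSubring F := pow_mem (X_mem_reesSubring hmono) k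
  rcases le_total n m with hnm | hmn
  · obtain ⟨k, rfl⟩ := Nat.exists_eq_add_of_le hnm
    rw [show C r * X ^ (n + k) = X ^ k * (C r * X ^ n) by ring]
    exact hJ.mul_mem _ (hXpow k) _ h
  · obtain ⟨k, rfl⟩ := Nat.exists_eq_add_of_le hmn
    refine hreg.mem_of_X_pow_mul_mem (X_mem_reesSubring hmono)
      (C_mul_X_pow_mem_reesSubring hr) k ?_
    rwa [mul_left_comm, ← pow_add, add_comm]

theorem exists_ideal_C_mul_X_pow_mem_iff (hunion : ∀ r : R, ∃ n, r ∈ F n) :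
    ∃ I : Ideal R, ∀ {r : R} {n : ℕ}, r ∈ F n → (C r * X ^ n ∈ J ↔ r ∈ I) := by
  have mem_F {r : R} {n : ℕ} (h : C r * X ^ n ∈ J) : r ∈ F n :=
    mem_of_C_mul_X_pow_mem_reesSubring (hJ.subset h)
  refine ⟨{ carrier := {r | ∃ n, C r * X ^ n ∈ J}
            zero_mem' := ⟨0, by simpa using hJ.zero_mem⟩
            add_mem' := ?_
            smul_mem' := ?_ }, fun hr => ⟨fun h => ⟨_, h⟩, fun ⟨_, h⟩ =>
              C_mul_X_pow_mem_of_C_mul_X_pow_mem hmono hJ hreg hr h⟩⟩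
  · rintro a b ⟨m, ha⟩ ⟨n, hb⟩
    have shift {c : R} {k : ℕ} (hk : k ≤ m + n) (hc : C c * X ^ k ∈ J) : C c * X ^ (m + n) ∈ J :=
      C_mul_X_pow_mem_of_C_mul_X_pow_mem hmono hJ hreg (hmono hk (mem_F hc)) hc
    refine ⟨m + n, ?_⟩
    rw [C_add, add_mul]
    exact hJ.add_mem _ (shift (Nat.le_add_right m n) ha) _ (shift (Nat.le_add_left n m) hb)
  · rintro c a ⟨n, ha⟩
    obtain ⟨k, hc⟩ := hunion c
    refine ⟨k + n, ?_⟩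
    rw [smul_eq_mul, C_mul, pow_add, mul_mul_mul_comm]
    exact hJ.mul_mem _ (C_mul_X_pow_mem_reesSubring hc) _ ha

theorem exists_reesIdeal_eq (hunion : ∀ r : R, ∃ n, r ∈ F n) (hgr : IsGraded J) :
    ∃ I : Ideal R, reesIdeal F I = J := by
  obtain ⟨I, hI⟩ := exists_ideal_C_mul_X_pow_mem_iff hmono hJ hreg hunion
  refine ⟨I, Set.ext fun p => ⟨fun hp => ?_, fun hp => ?_⟩⟩
  · obtain ⟨hpF, hpI⟩ := mem_reesIdeal.1 hp
    rw [p.as_sum_support_C_mul_X_pow]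
    exact hJ.sum_mem fun n _ => (hI (hpF n)).2 (hpI n)
  · have hpF := mem_reesSubring.1 (hJ.subset hp)
    exact mem_reesIdeal.2 ⟨hJ.subset hp, fun n => (hI (hpF n)).1 (hgr p hp n)⟩

end Surjectivity

theorem reesIdeal_top : reesIdeal F ⊤ = reesSubring F := by
  simp [reesIdeal, Ideal.map_top]

theorem isPrime_iff_isPrimeIn_reesIdeal (hunion : ∀ r : R, ∃ n, r ∈ F n) (I : Ideal R) :
    I.IsPrime ↔ IsPrimeIn (reesSubring F) (reesIdeal F I) := by
  refine ⟨fun hI => ⟨fun h => hI.ne_top ?_, fun p hp q hq hpq => ?_⟩, fun ⟨hne, hprime⟩ => ⟨?_, ?_⟩⟩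
  · have h1 : C 1 * X ^ 0 ∈ reesIdeal F I := by simp [h, one_mem]
    exact I.eq_top_iff_one.2 ((C_mul_X_pow_mem_reesIdeal_iff (SetLike.one_mem_graded F)).1 h1)
  · exact ((Ideal.isPrime_map_C_iff_isPrime I).2 hI).mem_or_mem hpq.2 |>.imp (⟨hp, ·⟩) (⟨hq, ·⟩)
  · rintro rfl
    exact hne reesIdeal_top
  · intro r s hrs
    obtain ⟨m, hr⟩ := hunion r
    obtain ⟨n, hs⟩ := hunion s
    have hprod : C r * X ^ m * (C s * X ^ n) ∈ reesIdeal F I := by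
      rw [mul_mul_mul_comm, ← C_mul, ← pow_add]
      exact (C_mul_X_pow_mem_reesIdeal_iff (SetLike.GradedMul.mul_mem hr hs)).2 hrs
    simpa only [C_mul_X_pow_mem_reesIdeal_iff hr, C_mul_X_pow_mem_reesIdeal_iff hs] using
      hprime _ (C_mul_X_pow_mem_reesSubring hr) _ (C_mul_X_pow_mem_reesSubring hs) hprod

theorem isRadical_iff_isRadicalIn_reesIdeal (hunion : ∀ r : R, ∃ n, r ∈ F n) (I : Ideal R) :
    I.IsRadical ↔ IsRadicalIn (reesSubring F) (reesIdeal F I) := by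
  refine ⟨fun hI _ hp n _ hpn => ⟨hp, hI.map_C (Ideal.mem_radical_iff.2 ⟨n, hpn.2⟩)⟩,
    fun h x hx => ?_⟩
  obtain ⟨n, hxn⟩ := Ideal.mem_radical_iff.1 hx
  obtain ⟨m, hxm⟩ := hunion x
  have hp := C_mul_X_pow_mem_reesSubring hxm
  -- `x ^ (n + 1)` rather than `x ^ n`, as `IsRadicalIn` only allows positive exponents
  have hpow : (C x * X ^ m) ^ (n + 1) ∈ reesIdeal F I := by
    refine ⟨pow_mem hp _, ?_⟩
    rw [mul_pow, ← C_pow, pow_succ']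
    exact Ideal.mul_mem_right _ _ (Ideal.mem_map_of_mem _ (I.mul_mem_left x hxn))
  exact (C_mul_X_pow_mem_reesIdeal_iff hxm).1 (h _ hp (n + 1) n.succ_pos hpow)

end ReesAlgebra

/-- For a filtered commutative ring `R` with Rees algebra
`ℛ = ⊕ₙ R_{≤n} zⁿ ⊆ R[z]`, the assignment `I ↦ ℐ = ⊕ₙ (I ∩ R_{≤n}) zⁿ` is a bijection from
ideals of `R` to graded ideals of `ℛ` such that `z` is a non-zero-divisor in `ℛ/ℐ`;
it preserves and reflects primeness and radicality. -/
theorem stmt5 {R : Type*} [CommRing R]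
    (F : ℕ → AddSubgroup R) (hmono : Monotone F) (hone : (1 : R) ∈ F 0)
    (hmulF : ∀ m n : ℕ, ∀ x y : R, x ∈ F m → y ∈ F n → x * y ∈ F (m + n))
    (hunion : ∀ r : R, ∃ n, r ∈ F n)
    -- the Rees algebra, as a subset of `R[z]`
    (Rees : Set (Polynomial R)) (hRees : Rees = {p | ∀ n, p.coeff n ∈ F n})
    -- the assignment `I ↦ ℐ`
    (Φ : Ideal R → Set (Polynomial R))
    (hΦ : ∀ I, Φ I = {p | (∀ n, p.coeff n ∈ F n) ∧ ∀ n, p.coeff n ∈ I})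
    -- "ideal of the Rees algebra"
    (IsReesIdeal : Set (Polynomial R) → Prop)
    (hRI : ∀ J, IsReesIdeal J ↔
      (J ⊆ Rees ∧ (0 : Polynomial R) ∈ J ∧ (∀ p ∈ J, ∀ q ∈ J, p + q ∈ J) ∧
        ∀ p ∈ Rees, ∀ q ∈ J, p * q ∈ J))
    -- "graded ideal": closed under taking homogeneous components
    (Graded : Set (Polynomial R) → Prop)
    (hGr : ∀ J, Graded J ↔
      ∀ p ∈ J, ∀ n : ℕ, Polynomial.C (p.coeff n) * Polynomial.X ^ n ∈ J)
    -- "`z` is a non-zero-divisor in `ℛ/J`"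
    (ZReg : Set (Polynomial R) → Prop)
    (hZ : ∀ J, ZReg J ↔ ∀ p ∈ Rees, Polynomial.X * p ∈ J → p ∈ J) :
    (∀ I : Ideal R, IsReesIdeal (Φ I) ∧ Graded (Φ I) ∧ ZReg (Φ I)) ∧
    Function.Injective Φ ∧
    (∀ J : Set (Polynomial R), IsReesIdeal J → Graded J → ZReg J → ∃ I : Ideal R, Φ I = J) ∧
    (∀ I : Ideal R, I.IsPrime ↔
      (Φ I ≠ Rees ∧ ∀ p ∈ Rees, ∀ q ∈ Rees, p * q ∈ Φ I → p ∈ Φ I ∨ q ∈ Φ I)) ∧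
    (∀ I : Ideal R, I.IsRadical ↔
      ∀ p ∈ Rees, ∀ n : ℕ, 0 < n → p ^ n ∈ Φ I → p ∈ Φ I) := by
  have : SetLike.GradedMonoid F := { one_mem := hone, mul_mem := fun m n _ _ => hmulF m n _ _ }
  obtain rfl : Rees = reesSubring F := hRees
  obtain rfl : Φ = reesIdeal F := funext fun I => by
    ext p
    rw [hΦ, mem_reesIdeal]
    rfl
  obtain rfl : IsReesIdeal = IsIdealIn (reesSubring F) :=
    funext fun J => propext ((hRI J).trans isIdealIn_iff.symm)
  obtain rfl : Graded = IsGraded := funext fun J => propext (hGr J)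
  obtain rfl : ZReg = IsXRegular (reesSubring F) := funext fun J => propext (hZ J)
  exact ⟨fun I => ⟨isIdealIn_reesIdeal I, isGraded_reesIdeal I, isXRegular_reesIdeal I⟩,
    reesIdeal_injective hunion,
    fun J hJ hgr hreg => exists_reesIdeal_eq hmono hJ hreg hunion hgr,
    isPrime_iff_isPrimeIn_reesIdeal hunion, isRadical_iff_isRadicalIn_reesIdeal hunion⟩
end
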